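/- arXiv:0901.0390 — 4 statements merged into one kernel-verified Lean document; each statement's English description precedes it below -/
import Mathlib

section
/- If u : ℤ × ℤ → ℝ satisfies the discrete KdV equation (u(k,l) - u(k+1,l+1))·(u(k+1,l) - u(k,l+1)) + β - α = 0 for all k,l, and all relevant differences are positive, then F(k,l) = -log(u(k,l+1) - u(k-1,l)) and G(k,l) = log(u(k+1,l) - u(k-1,l)) form a conservation law: G(k,l+1) - G(k,l) + F(k+1,l) - F(k,l) = 0 for all k,l. -/
/-!
Two instances of the dKdV equation on adjacent squares, at `(k, l)` and `(k - 1, l)`, share the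
constant `α - β`; subtracting them gives a product identity between four differences of `u`,
and taking logarithms of that identity is exactly the conservation law.
-/

theorem dKdV_adjacent_squares_mul_eq {R : Type*} [CommRing R] (u : ℤ × ℤ → R) (c : R)
    (hu : ∀ k l : ℤ, (u (k, l) - u (k + 1, l + 1)) * (u (k + 1, l) - u (k, l + 1)) = c)
    (k l : ℤ) :
    (u (k + 1, l + 1) - u (k - 1, l + 1)) * (u (k, l + 1) - u (k - 1, l)) =
      (u (k + 1, l) - u (k - 1, l)) * (u (k + 1, l + 1) - u (k, l)) := by
  have hleft := hu (k - 1) l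
  simp only [sub_add_cancel] at hleft
  linear_combination hu k l - hleft

/-- the logarithmic conservation law for the discrete KdV equation. -/
theorem dKdV_basic_conservation_law (u : ℤ × ℤ → ℝ) (α β : ℝ)
    (hdkdv : ∀ k l : ℤ,
      (u (k, l) - u (k + 1, l + 1)) * (u (k + 1, l) - u (k, l + 1)) + β - α = 0)
    (hpos1 : ∀ k l : ℤ, 0 < u (k, l + 1) - u (k - 1, l))
    (hpos2 : ∀ k l : ℤ, 0 < u (k + 1, l) - u (k - 1, l))
    (F G : ℤ × ℤ → ℝ)
    (hF : ∀ k l : ℤ, F (k, l) = -Real.log (u (k, l + 1) - u (k - 1, l)))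
    (hG : ∀ k l : ℤ, G (k, l) = Real.log (u (k + 1, l) - u (k - 1, l))) :
    ∀ k l : ℤ, G (k, l + 1) - G (k, l) + (F (k + 1, l) - F (k, l)) = 0 := by
  intro k l
  have key := congrArg Real.log <|
    dKdV_adjacent_squares_mul_eq u (α - β) (fun k l => by linear_combination hdkdv k l) k l
  have hpos_right : 0 < u (k + 1, l + 1) - u (k, l) := by
    simpa only [add_sub_cancel_right] using hpos1 (k + 1) l
  rw [Real.log_mul (hpos2 k (l + 1)).ne' (hpos1 k l).ne',
    Real.log_mul (hpos2 k l).ne' hpos_right.ne'] at key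
  rw [hG, hG, hF, hF, add_sub_cancel_right]
  linarith
end

section
/- If u : ℤ × ℤ → ℝ satisfies the dKdV equation and ũ : ℤ × ℤ → ℝ satisfies the Bäcklund transformation equations (ũ(k,l) - u(k,l+1))·(u(k,l) - ũ(k,l+1)) = θ - β and (ũ(k,l) - u(k+1,l))·(u(k,l) - ũ(k+1,l)) = θ - α for all k,l, with all differences ũ(k,l) - u(k,l+1) and ũ(k,l) - u(k+1,l) positive, then F(k,l) = -log(ũ(k,l) - u(k,l+1)) and G(k,l) = log(ũ(k,l) - u(k+1,l)) satisfy the conservation law G(k,l+1) - G(k,l) + F(k+1,l) - F(k,l) = 0. -/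
/-!
Around each plaquette, the dKdV equation together with the two Bäcklund relations at `(k, l)`
forces the multiplicative balance
`(ũ(k,l+1) - u(k+1,l+1)) (ũ(k,l) - u(k,l+1)) = (ũ(k,l) - u(k+1,l)) (ũ(k+1,l) - u(k+1,l+1))`,
a polynomial identity (the dKdV relation minus the first Bäcklund relation plus the second).
All four factors are positive, so taking logarithms turns it into the conservation law.
-/

theorem backlund_plaquette_mul_eq {R : Type*} [CommRing R]
    {u₀₀ u₁₀ u₀₁ u₁₁ v₀₀ v₁₀ v₀₁ α β θ : R}
    (hdkdv : (u₀₀ - u₁₁) * (u₁₀ - u₀₁) = α - β)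
    (hBT1 : (v₀₀ - u₀₁) * (u₀₀ - v₀₁) = θ - β)
    (hBT2 : (v₀₀ - u₁₀) * (u₀₀ - v₁₀) = θ - α) :
    (v₀₁ - u₁₁) * (v₀₀ - u₀₁) = (v₀₀ - u₁₀) * (v₁₀ - u₁₁) := by
  linear_combination hdkdv - hBT1 + hBT2

/-- the Bäcklund transformation of dKdV yields a conservation law. -/
theorem dKdV_backlund_conservation_law (u ut : ℤ × ℤ → ℝ) (α β θ : ℝ)
    (hdkdv : ∀ k l : ℤ,
      (u (k, l) - u (k + 1, l + 1)) * (u (k + 1, l) - u (k, l + 1)) = α - β)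
    (hBT1 : ∀ k l : ℤ,
      (ut (k, l) - u (k, l + 1)) * (u (k, l) - ut (k, l + 1)) = θ - β)
    (hBT2 : ∀ k l : ℤ,
      (ut (k, l) - u (k + 1, l)) * (u (k, l) - ut (k + 1, l)) = θ - α)
    (hpos1 : ∀ k l : ℤ, 0 < ut (k, l) - u (k, l + 1))
    (hpos2 : ∀ k l : ℤ, 0 < ut (k, l) - u (k + 1, l))
    (F G : ℤ × ℤ → ℝ)
    (hF : ∀ k l : ℤ, F (k, l) = -Real.log (ut (k, l) - u (k, l + 1)))
    (hG : ∀ k l : ℤ, G (k, l) = Real.log (ut (k, l) - u (k + 1, l))) :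
    ∀ k l : ℤ, G (k, l + 1) - G (k, l) + (F (k + 1, l) - F (k, l)) = 0 := by
  intro k l
  have hlog := congrArg Real.log
    (backlund_plaquette_mul_eq (hdkdv k l) (hBT1 k l) (hBT2 k l))
  rw [Real.log_mul (hpos2 k (l + 1)).ne' (hpos1 k l).ne',
    Real.log_mul (hpos2 k l).ne' (hpos1 (k + 1) l).ne'] at hlog
  rw [hG, hG, hF, hF]
  linarith
end

section
/- If a C² function u(x,t) satisfies u_x² - u_t² = C with C ≠ 0 and u_x, u_t nowhere zero, then for each n ≥ 1, the pair Fₙ = fₙ(u_x) and Gₙ = 1/u_x^{2n} is a conservation law, where fₙ is any antiderivative of s ↦ 2n/(s^{2n}·√(s² - C)) on the range of u_x (assuming u_x² > C); i.e. ∂_x Fₙ + ∂_t Gₙ = 0. -/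
/-!
Differentiating the eikonal equation gives `u_x u_xx = u_t u_xt`, and with `√(u_x² - C) = |u_t|`
the chain rule turns `∂ₓ fₙ(u_x) + ∂ₜ u_x^{-2n}` into `2n u_xx / u_x^{2n} · (1/|u_t| - 1/u_t)`,
which vanishes where `u_t > 0`.

Where `u_t < 0` we use that the solution is global. The quotient `g = -u_x/u_t` solves the
inviscid Burgers equation `g_t + g g_x = 0` on all of `ℝ²`, so `g` is constant along the straight
characteristics `s ↦ p + s (g p, 1)`; two characteristics of different slopes meet, so `g` is
constant. Then `g_x = 0` together with `u_x u_xx = u_t u_tx` gives `C u_xx = 0`, hence `u_xx = 0`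
and `u_xt = 0`.
-/

open Real

theorem eq_zero_of_hasDerivAt_eq_mul {k c : ℝ → ℝ} (hc : Continuous c)
    (hk : ∀ t, HasDerivAt k (c t * k t) t) (h0 : k 0 = 0) (t : ℝ) : k t = 0 := by
  set I : ℝ → ℝ := fun s => exp (-∫ x in (0 : ℝ)..s, c x)
  have hI : ∀ s, HasDerivAt I (-c s * I s) s := fun s =>
    ((hc.integral_hasStrictDerivAt 0 s).hasDerivAt.neg.exp).congr_deriv
      (by simp only [I, Pi.neg_apply]; ring)
  have hkI : ∀ s, HasDerivAt (fun s => k s * I s) 0 s := fun s =>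
    ((hk s).mul (hI s)).congr_deriv (by ring)
  have hconst := is_const_of_deriv_eq_zero (fun s => (hkI s).differentiableAt)
    (fun s => (hkI s).deriv) t 0
  simpa [I, h0, (exp_pos _).ne'] using hconst

section Calculus

variable {E : Type*} [NormedAddCommGroup E] [NormedSpace ℝ E]

theorem fderiv_comp_apply_of_hasDerivAt {f : ℝ → ℝ} {f' : ℝ} {φ : E → ℝ} {p : E}
    (hf : HasDerivAt f f' (φ p)) (hφ : DifferentiableAt ℝ φ p) (v : E) :
    fderiv ℝ (fun q => f (φ q)) p v = f' * fderiv ℝ φ p v := by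
  have h : HasFDerivAt (fun q => f (φ q)) (f' • fderiv ℝ φ p) p :=
    hf.comp_hasFDerivAt p hφ.hasFDerivAt
  rw [h.fderiv]
  rfl

theorem fderiv_div_apply {φ ψ : E → ℝ} {p : E} (hφ : DifferentiableAt ℝ φ p)
    (hψ : DifferentiableAt ℝ ψ p) (hψp : ψ p ≠ 0) (v : E) :
    fderiv ℝ (fun q => φ q / ψ q) p v =
      (fderiv ℝ φ p v * ψ p - φ p * fderiv ℝ ψ p v) / ψ p ^ 2 := by
  have h : HasFDerivAt (fun q => φ q * (ψ q)⁻¹) _ p :=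
    hφ.hasFDerivAt.mul ((hasDerivAt_inv hψp).comp_hasFDerivAt p hψ.hasFDerivAt)
  simp only [div_eq_mul_inv, h.fderiv]
  simp only [neg_smul, smul_neg, add_apply, neg_apply, smul_apply, smul_eq_mul]
  field_simp
  ring

theorem mul_fderiv_eq_mul_fderiv_of_sq_sub_sq_eq {φ ψ : E → ℝ} {C : ℝ}
    (hφ : Differentiable ℝ φ) (hψ : Differentiable ℝ ψ) (h : ∀ p, φ p ^ 2 - ψ p ^ 2 = C)
    (p v : E) : φ p * fderiv ℝ φ p v = ψ p * fderiv ℝ ψ p v := by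
  have hderiv : HasFDerivAt (fun q => φ q ^ 2 - ψ q ^ 2) _ p :=
    ((hφ p).hasFDerivAt.pow 2).sub ((hψ p).hasFDerivAt.pow 2)
  rw [show (fun q => φ q ^ 2 - ψ q ^ 2) = fun _ => C from funext h] at hderiv
  have hv := congrArg (· v) (hderiv.unique (hasFDerivAt_const C p))
  simp only [Nat.add_one_sub_one, pow_one, nsmul_eq_mul, Nat.cast_ofNat, sub_apply, smul_apply,
    smul_eq_mul, zero_apply] at hv
  linarith

theorem contDiff_of_eq_fderiv_apply {u w : E → ℝ} {v : E} (hu : ContDiff ℝ 2 u)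
    (hw : ∀ p, w p = fderiv ℝ u p v) : ContDiff ℝ 1 w := by
  rw [funext hw]
  exact (hu.fderiv_right le_rfl).clm_apply contDiff_const

theorem fderiv_fderiv_apply_comm {u : E → ℝ} (hu : ContDiff ℝ 2 u) (p v w : E) :
    fderiv ℝ (fun q => fderiv ℝ u q v) p w = fderiv ℝ (fun q => fderiv ℝ u q w) p v := by
  have hd : DifferentiableAt ℝ (fderiv ℝ u) p :=
    (hu.fderiv_right (m := 1) le_rfl).differentiable one_ne_zero p
  rw [fderiv_clm_apply hd (differentiableAt_const v), fderiv_clm_apply hd (differentiableAt_const w)]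
  simpa using hu.contDiffAt.isSymmSndFDerivAt (by simp) w v

end Calculus

section Burgers

def SolvesBurgers (g : ℝ × ℝ → ℝ) : Prop :=
  ∀ p, fderiv ℝ g p (0, 1) + g p * fderiv ℝ g p (1, 0) = 0

variable {g : ℝ × ℝ → ℝ}

theorem SolvesBurgers.apply_characteristic (hg : ContDiff ℝ 1 g) (hB : SolvesBurgers g)
    (p : ℝ × ℝ) (s : ℝ) : g (p + s • (g p, 1)) = g p := by
  set L : ℝ → ℝ × ℝ := fun s => p + s • (g p, 1)
  have hL : ∀ s, HasDerivAt L (g p, 1) s := fun s =>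
    (((hasDerivAt_id' s).smul_const (g p, (1 : ℝ))).const_add p).congr_deriv (one_smul _ _)
  have hk : ∀ s, HasDerivAt (fun s => g p - g (L s))
      (-fderiv ℝ g (L s) (1, 0) * (g p - g (L s))) s := by
    intro s
    refine ((hg.differentiable one_ne_zero (L s)).hasFDerivAt.comp_hasDerivAt s
      (hL s)).const_sub (g p) |>.congr_deriv ?_
    have hdir : (g p, (1 : ℝ)) = g p • ((1 : ℝ), (0 : ℝ)) + ((0 : ℝ), (1 : ℝ)) := by simp
    rw [hdir, map_add, map_smul, smul_eq_mul]
    linear_combination -hB (L s)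
  have hc : Continuous fun s => -fderiv ℝ g (L s) (1, 0) :=
    (((hg.continuous_fderiv one_ne_zero).clm_apply continuous_const).comp
      (by fun_prop : Continuous L)).neg
  linarith [eq_zero_of_hasDerivAt_eq_mul hc hk (by simp [L, Prod.mk_zero_zero]) s]

theorem SolvesBurgers.apply_eq (hg : ContDiff ℝ 1 g) (hB : SolvesBurgers g) (p q : ℝ × ℝ) :
    g p = g q := by
  by_contra hne
  obtain ⟨s, hs⟩ : ∃ s, s * (g p - g q) = q.1 - p.1 - (q.2 - p.2) * g q :=
    ⟨_, div_mul_cancel₀ _ (sub_ne_zero.2 hne)⟩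
  have hmeet : p + s • (g p, 1) = q + (s - (q.2 - p.2)) • (g q, 1) := by
    refine Prod.ext ?_ ?_
    · simp only [Prod.fst_add, Prod.smul_fst, smul_eq_mul]
      linear_combination hs
    · simp only [Prod.snd_add, Prod.smul_snd, smul_eq_mul]
      ring
  apply hne
  rw [← hB.apply_characteristic hg p s, ← hB.apply_characteristic hg q, hmeet]

end Burgers

section Eikonal

variable {u ux ut : ℝ × ℝ → ℝ} {C : ℝ}

theorem fderiv_ux_t_eq_fderiv_ut_x (hu : ContDiff ℝ 2 u)
    (hux : ∀ p, ux p = fderiv ℝ u p (1, 0)) (hut : ∀ p, ut p = fderiv ℝ u p (0, 1))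
    (p : ℝ × ℝ) : fderiv ℝ ux p (0, 1) = fderiv ℝ ut p (1, 0) := by
  obtain rfl := funext hux
  obtain rfl := funext hut
  exact fderiv_fderiv_apply_comm hu p _ _

theorem solvesBurgers_neg_div_of_eikonal (hu : ContDiff ℝ 2 u)
    (hux : ∀ p, ux p = fderiv ℝ u p (1, 0)) (hut : ∀ p, ut p = fderiv ℝ u p (0, 1))
    (heik : ∀ p, ux p ^ 2 - ut p ^ 2 = C) (ht : ∀ p, ut p ≠ 0) :
    SolvesBurgers fun q => -ux q / ut q := by
  intro p
  have hdx := (contDiff_of_eq_fderiv_apply hu hux).differentiable one_ne_zero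
  have hdt := (contDiff_of_eq_fderiv_apply hu hut).differentiable one_ne_zero
  have hdiff_x := mul_fderiv_eq_mul_fderiv_of_sq_sub_sq_eq hdx hdt heik p (1, 0)
  have hdiff_t := mul_fderiv_eq_mul_fderiv_of_sq_sub_sq_eq hdx hdt heik p (0, 1)
  have hsymm := fderiv_ux_t_eq_fderiv_ut_x hu hux hut p
  have hnx : DifferentiableAt ℝ (fun q => -ux q) p := (hdx p).neg
  rw [fderiv_div_apply hnx (hdt p) (ht p), fderiv_div_apply hnx (hdt p) (ht p), fderiv_fun_neg]
  simp only [neg_apply]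
  have htp := ht p
  field_simp
  linear_combination -ux p * hdiff_t + ut p * hdiff_x + (ux p ^ 2 - ut p ^ 2) * hsymm

theorem eikonal_fderiv_ux_x_eq_zero (hC : C ≠ 0) (hu : ContDiff ℝ 2 u)
    (hux : ∀ p, ux p = fderiv ℝ u p (1, 0)) (hut : ∀ p, ut p = fderiv ℝ u p (0, 1))
    (heik : ∀ p, ux p ^ 2 - ut p ^ 2 = C) (ht : ∀ p, ut p ≠ 0) (p : ℝ × ℝ) :
    fderiv ℝ ux p (1, 0) = 0 := by
  have hcx := contDiff_of_eq_fderiv_apply hu hux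
  have hct := contDiff_of_eq_fderiv_apply hu hut
  have hg : ContDiff ℝ 1 fun q => -ux q / ut q := hcx.neg.div hct ht
  have hconst : (fun q => -ux q / ut q) = fun _ => -ux p / ut p :=
    funext fun q => (solvesBurgers_neg_div_of_eikonal hu hux hut heik ht).apply_eq hg q p
  have hgx : fderiv ℝ (fun q => -ux q / ut q) p (1, 0) = 0 := by simp [hconst]
  have hnx : DifferentiableAt ℝ (fun q => -ux q) p := (hcx.differentiable one_ne_zero p).neg
  rw [fderiv_div_apply hnx (hct.differentiable one_ne_zero p) (ht p), fderiv_fun_neg, neg_apply,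
    div_eq_zero_iff] at hgx
  have hnum := hgx.resolve_right (pow_ne_zero 2 (ht p))
  have hdiff_x := mul_fderiv_eq_mul_fderiv_of_sq_sub_sq_eq (hcx.differentiable one_ne_zero)
    (hct.differentiable one_ne_zero) heik p (1, 0)
  have hCuxx : C * fderiv ℝ ux p (1, 0) = 0 := by
    linear_combination -fderiv ℝ ux p (1, 0) * heik p + ux p * hdiff_x + ut p * hnum
  exact (mul_eq_zero.1 hCuxx).resolve_left hC

end Eikonal

theorem eikonal_higher_conservation_laws_general (u : ℝ × ℝ → ℝ) (C : ℝ) (hC : C ≠ 0)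
    (hu : ContDiff ℝ 2 u)
    (ux ut : ℝ × ℝ → ℝ)
    (hux : ∀ p, ux p = fderiv ℝ u p (1, 0))
    (hut : ∀ p, ut p = fderiv ℝ u p (0, 1))
    (heik : ∀ p, (ux p) ^ 2 - (ut p) ^ 2 = C)
    (hx : ∀ p, ux p ≠ 0) (ht : ∀ p, ut p ≠ 0)
    (n : ℕ) (hn : 1 ≤ n) (f : ℝ → ℝ)
    (hf : ∀ p, HasDerivAt f
      (2 * n / ((ux p) ^ (2 * n) * Real.sqrt ((ux p) ^ 2 - C))) (ux p)) :
    ∀ p : ℝ × ℝ,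
      fderiv ℝ (fun q => f (ux q)) p (1, 0) +
        fderiv ℝ (fun q => ((ux q) ^ (2 * n))⁻¹) p (0, 1) = 0 := by
  intro p
  have hdx := (contDiff_of_eq_fderiv_apply hu hux).differentiable one_ne_zero
  have hdt := (contDiff_of_eq_fderiv_apply hu hut).differentiable one_ne_zero
  have hmix : ux p * fderiv ℝ ux p (1, 0) = ut p * fderiv ℝ ux p (0, 1) := by
    rw [fderiv_ux_t_eq_fderiv_ut_x hu hux hut]
    exact mul_fderiv_eq_mul_fderiv_of_sq_sub_sq_eq hdx hdt heik p (1, 0)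
  have hsqrt : √(ux p ^ 2 - C) = |ut p| := by rw [← heik p, sub_sub_cancel, sqrt_sq_eq_abs]
  rw [fderiv_comp_apply_of_hasDerivAt (hf p) (hdx p),
    fderiv_comp_apply_of_hasDerivAt (f := fun s => (s ^ (2 * n))⁻¹)
      ((hasDerivAt_pow (2 * n) (ux p)).inv (pow_ne_zero _ (hx p))) (hdx p), hsqrt]
  rcases (ht p).lt_or_gt with hneg | hpos
  · have huxx := eikonal_fderiv_ux_x_eq_zero hC hu hux hut heik ht p
    have huxt : fderiv ℝ ux p (0, 1) = 0 := by simpa [huxx, ht p] using hmix.symm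
    rw [huxx, huxt, mul_zero, mul_zero, add_zero]
  · have hxp := hx p
    rw [abs_of_pos hpos, pow_sub₀ _ hxp (by omega : 1 ≤ 2 * n)]
    field_simp
    push_cast
    linear_combination 2 * (n : ℝ) * hmix

/-- for each n ≥ 1, Fₙ = fₙ(u_x), Gₙ = u_x^{-2n} is a conservation law of
the eikonal equation, where fₙ is an antiderivative of s ↦ 2n/(s^{2n}√(s² - C)). -/
theorem eikonal_higher_conservation_laws (u : ℝ × ℝ → ℝ) (C : ℝ) (hC : C ≠ 0)
    (hu : ContDiff ℝ 2 u)
    (ux ut : ℝ × ℝ → ℝ)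
    (hux : ∀ p, ux p = fderiv ℝ u p (1, 0))
    (hut : ∀ p, ut p = fderiv ℝ u p (0, 1))
    (heik : ∀ p, (ux p) ^ 2 - (ut p) ^ 2 = C)
    (hx : ∀ p, ux p ≠ 0) (ht : ∀ p, ut p ≠ 0)
    (hxC : ∀ p, C < (ux p) ^ 2)
    (n : ℕ) (hn : 1 ≤ n) (f : ℝ → ℝ)
    (hf : ∀ p, HasDerivAt f
      (2 * n / ((ux p) ^ (2 * n) * Real.sqrt ((ux p) ^ 2 - C))) (ux p)) :
    ∀ p : ℝ × ℝ,
      fderiv ℝ (fun q => f (ux q)) p (1, 0) +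
        fderiv ℝ (fun q => ((ux q) ^ (2 * n))⁻¹) p (0, 1) = 0 :=
  eikonal_higher_conservation_laws_general u C hC hu ux ut hux hut heik hx ht n hn f hf
end

section
/- Let c(t) = Σ_{n≥0} Cₙ tⁿ be the generating function of the Catalan numbers as a formal power series over ℚ. Define Hₙ (n ≥ 1) by log(c(t)) = Σ_{n≥1} Hₙ tⁿ, i.e. the formal logarithm of c(t) (which has constant term 1). Then Hₙ = (2n-1)!/(n!)² for all n ≥ 1. -/
/-!
Write `f = c - 1`. Since `f ^ k` is divisible by `X ^ k`, the `n`-th coefficient of `log (1 + f)` is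
the finite sum in the statement, and differentiating term by term shows that it equals
`coeff (n - 1) g / n` for any `g` with `f' = (1 + f) * g`, i.e. `g = c' / c`.
For the Catalan series, `c = 1 + X c²` gives `c' (1 - 2 X c) = c²`, while `s = 1 - 2 X c`
satisfies `s² = 1 - 4 X`, so `s` is the inverse of `B = ∑ centralBinom n Xⁿ = (1 - 4 X)^(-1/2)`.
Hence `c' / c = c B = (B - 1) / (2 X)`, whose coefficients are `centralBinom (n + 1) / 2`.
-/

open Nat PowerSeries Finset

namespace PowerSeries

section LogOneAdd

variable {K : Type*} [Field K] [CharZero K]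

/-- When `constantCoeff f = 0` the terms with `k > n` vanish, so this is the `n`-th coefficient
of `log (1 + f)`. -/
noncomputable def logOneAddCoeff (f : K⟦X⟧) (n : ℕ) : K :=
  ∑ k ∈ Icc 1 n, (-1 : K) ^ (k + 1) * coeff n (f ^ k) / k

theorem succ_mul_logOneAddCoeff_succ (f : K⟦X⟧) (m : ℕ) :
    (m + 1) * logOneAddCoeff f (m + 1) =
      coeff m (d⁄dX K f * ∑ j ∈ range (m + 1), (-f) ^ j) := by
  rw [logOneAddCoeff, ← Ico_add_one_right_eq_Icc, sum_Ico_eq_sum_range, add_tsub_cancel_right,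
    mul_sum, mul_sum, map_sum]
  refine sum_congr rfl fun j _ => ?_
  have hpow : coeff m (d⁄dX K (f ^ (j + 1))) = (j + 1) * coeff m (f ^ j * d⁄dX K f) := by
    rw [derivative_pow, add_tsub_cancel_right, mul_assoc, ← map_natCast (C (R := K)), coeff_C_mul]
    push_cast
    ring
  have hsign : d⁄dX K f * (-f) ^ j = C ((-1) ^ j) * (f ^ j * d⁄dX K f) := by
    rw [neg_pow f, map_pow, map_neg, map_one]
    ring
  rw [coeff_derivative] at hpow
  rw [hsign, coeff_C_mul, add_comm 1 j]
  push_cast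
  field_simp
  linear_combination (-1) ^ j * hpow

theorem logOneAddCoeff_succ_of_derivative_eq_mul {f g : K⟦X⟧} (hf : constantCoeff f = 0)
    (hg : d⁄dX K f = (1 + f) * g) (m : ℕ) : logOneAddCoeff f (m + 1) = coeff m g / (m + 1) := by
  have hvanish : coeff m (g * (-f) ^ (m + 1)) = 0 :=
    X_pow_dvd_iff.mp (Dvd.dvd.mul_left (pow_dvd_pow_of_dvd (X_dvd_iff.mpr (by simp [hf])) _) g) m
      (lt_add_one m)
  rw [eq_div_iff (Nat.cast_add_one_ne_zero m), mul_comm, succ_mul_logOneAddCoeff_succ, hg,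
    mul_comm (1 + f), mul_assoc, ← sub_neg_eq_add, mul_neg_geom_sum, mul_sub, mul_one, map_sub,
    hvanish, sub_zero]

end LogOneAdd

section CentralBinom

variable {R : Type*} [CommRing R]

variable (R) in
noncomputable def centralBinomSeries : R⟦X⟧ := mk fun n => (centralBinom n : R)

theorem constantCoeff_centralBinomSeries : constantCoeff (centralBinomSeries R) = 1 := by
  simp [centralBinomSeries, ← coeff_zero_eq_constantCoeff_apply]

theorem one_sub_four_X_mul_derivative_centralBinomSeries :
    (1 - 4 * X) * d⁄dX R (centralBinomSeries R) = 2 * centralBinomSeries R := by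
  have hrec (k : ℕ) :
      ((k + 1 : ℕ) : R) * centralBinom (k + 1) = 2 * (2 * k + 1) * centralBinom k := by
    have h := congrArg (Nat.cast : ℕ → R) (succ_mul_centralBinom_succ k)
    push_cast at h ⊢
    exact h
  rw [sub_mul, one_mul, mul_assoc, show (4 : R⟦X⟧) = C 4 from (map_ofNat C 4).symm,
    show (2 : R⟦X⟧) = C 2 from (map_ofNat C 2).symm]
  ext (_ | n)
  · rw [map_sub, coeff_C_mul, coeff_C_mul, coeff_zero_X_mul]
    simp only [centralBinomSeries, coeff_derivative, coeff_mk]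
    push_cast
    linear_combination hrec 0
  · rw [map_sub, coeff_C_mul, coeff_C_mul, coeff_succ_X_mul]
    simp only [centralBinomSeries, coeff_derivative, coeff_mk]
    have h := hrec (n + 1)
    push_cast at h ⊢
    linear_combination h

theorem derivative_mul_one_sub_two_X_mul_of_eq {c : R⟦X⟧} (hc : c = 1 + X * c ^ 2) :
    d⁄dX R c * (1 - 2 * X * c) = c ^ 2 := by
  have h := congrArg (d⁄dX R) hc
  rw [map_add, derivative_one, Derivation.leibniz, derivative_X, derivative_pow] at h
  simp only [smul_eq_mul] at h
  linear_combination h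

theorem one_sub_two_X_mul_mul_centralBinomSeries_of_eq [IsAddTorsionFree R] {c : R⟦X⟧}
    (hc : c = 1 + X * c ^ 2) : (1 - 2 * X * c) * centralBinomSeries R = 1 := by
  set s : R⟦X⟧ := 1 - 2 * X * c
  have hsq : s ^ 2 = 1 - 4 * X := by linear_combination (-4 * X) * hc
  have hds : s * d⁄dX R s = -2 := by
    have hder := derivative_mul_one_sub_two_X_mul_of_eq hc
    have htwo : d⁄dX R (2 : R⟦X⟧) = 0 := (d⁄dX R).map_natCast 2
    simp only [s, map_sub, derivative_one, Derivation.leibniz, derivative_X, htwo,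
      smul_eq_mul] at hder ⊢
    linear_combination (-2 * X) * hder - 2 * hc
  -- `(1 - 4X) (s B)' = s² s' B + s (1 - 4X) B' = -2 s B + 2 s B`, and `1 - 4X` is a unit.
  have hunit : IsUnit (1 - 4 * X : R⟦X⟧) := isUnit_iff_constantCoeff.mpr (by simp)
  have hconst : d⁄dX R (s * centralBinomSeries R) = 0 := by
    refine hunit.mul_right_eq_zero.mp ?_
    rw [Derivation.leibniz, smul_eq_mul, smul_eq_mul]
    linear_combination s * one_sub_four_X_mul_derivative_centralBinomSeries (R := R) +
      (s * centralBinomSeries R) * hds - (centralBinomSeries R * d⁄dX R s) * hsq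
  refine derivative.ext (by rw [hconst, derivative_one]) ?_
  simp [s, constantCoeff_centralBinomSeries]

theorem derivative_eq_mul_mul_centralBinomSeries_of_eq [IsAddTorsionFree R] {c : R⟦X⟧}
    (hc : c = 1 + X * c ^ 2) : d⁄dX R c = c * (c * centralBinomSeries R) := by
  calc d⁄dX R c = d⁄dX R c * ((1 - 2 * X * c) * centralBinomSeries R) := by
        rw [one_sub_two_X_mul_mul_centralBinomSeries_of_eq hc, mul_one]
    _ = c * (c * centralBinomSeries R) := by
        rw [← mul_assoc, derivative_mul_one_sub_two_X_mul_of_eq hc]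
        ring

theorem two_mul_coeff_mul_centralBinomSeries_of_eq [IsAddTorsionFree R] {c : R⟦X⟧}
    (hc : c = 1 + X * c ^ 2) (m : ℕ) :
    2 * coeff m (c * centralBinomSeries R) = centralBinom (m + 1) := by
  have h := congrArg (coeff (m + 1)) (one_sub_two_X_mul_mul_centralBinomSeries_of_eq hc)
  rw [sub_mul, one_mul, mul_assoc, mul_assoc, show (2 : R⟦X⟧) = C 2 from (map_ofNat C 2).symm,
    map_sub, coeff_C_mul, coeff_succ_X_mul, coeff_one, if_neg (succ_ne_zero m)] at h
  simp only [centralBinomSeries, coeff_mk] at h ⊢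
  linear_combination -h

end CentralBinom

end PowerSeries

namespace Nat

variable {K : Type*} [Field K] [CharZero K]

theorem cast_centralBinom_eq_factorial_div (n : ℕ) :
    (centralBinom n : K) = (2 * n)! / n ! ^ 2 := by
  rw [centralBinom_eq_two_mul_choose, cast_choose K (by omega), two_mul, Nat.add_sub_cancel, sq]

theorem cast_catalan_eq_factorial_div (n : ℕ) :
    (catalan n : K) = (2 * n)! / (n ! * (n + 1)!) := by
  have h := congrArg (Nat.cast : ℕ → K) (succ_mul_catalan_eq_centralBinom n)
  push_cast at h
  rw [cast_centralBinom_eq_factorial_div] at h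
  rw [factorial_succ]
  push_cast
  field_simp at h ⊢
  linear_combination h

theorem cast_centralBinom_div_two_mul_eq_factorial_div {n : ℕ} (hn : 1 ≤ n) :
    (centralBinom n : K) / (2 * n) = (2 * n - 1)! / n ! ^ 2 := by
  obtain ⟨m, rfl⟩ := exists_eq_add_one.mpr hn
  rw [cast_centralBinom_eq_factorial_div, show 2 * (m + 1) = (2 * m + 1) + 1 by ring,
    factorial_succ, Nat.add_sub_cancel]
  push_cast
  field_simp
  ring

end Nat

open Nat PowerSeries in
/-- the coefficients Hₙ of the formal logarithm of the Catalan
generating function c(t) are Hₙ = (2n-1)!/(n!)². The formal logarithm of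
c = 1 + f (with f of zero constant term) is Σ_{k≥1} (-1)^{k+1} f^k/k, and its
n-th coefficient only involves k ≤ n. -/
theorem log_catalan_generating_function
    (C : ℕ → ℚ) (hC : ∀ n : ℕ, C n = ((2 * n)! : ℚ) / ((n ! : ℚ) * ((n + 1)! : ℚ)))
    (c : PowerSeries ℚ) (hc : c = PowerSeries.mk C)
    (H : ℕ → ℚ) (hH : ∀ n : ℕ, 1 ≤ n → H n = ((2 * n - 1)! : ℚ) / ((n ! : ℚ) ^ 2)) :
    ∀ n : ℕ, 1 ≤ n →
      (∑ k ∈ Finset.Icc 1 n,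
        (-1 : ℚ) ^ (k + 1) * (PowerSeries.coeff n ((c - 1) ^ k)) / k) = H n := by
  intro n hn
  obtain ⟨m, rfl⟩ := exists_eq_add_one.mpr hn
  have hcat : c = map (Nat.castRingHom ℚ) catalanSeries := by
    ext k
    simp [hc, hC, cast_catalan_eq_factorial_div]
  have hquad : c = 1 + X * c ^ 2 := by
    have h := congrArg (map (Nat.castRingHom ℚ)) catalanSeries_sq_mul_X_add_one
    rw [map_add, map_mul, map_pow, map_X, map_one, ← hcat] at h
    linear_combination -h
  have hlog : d⁄dX ℚ (c - 1) = (1 + (c - 1)) * (c * centralBinomSeries ℚ) := by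
    rw [map_sub, derivative_one, sub_zero, add_sub_cancel,
      derivative_eq_mul_mul_centralBinomSeries_of_eq hquad]
  have hconst : constantCoeff (c - 1) = 0 := by
    simp [hcat, ← coeff_zero_eq_constantCoeff_apply, -coeff_zero_eq_constantCoeff]
  have hcoeff := two_mul_coeff_mul_centralBinomSeries_of_eq hquad m
  calc _ = logOneAddCoeff (c - 1) (m + 1) := rfl
    _ = coeff m (c * centralBinomSeries ℚ) / (m + 1) :=
        logOneAddCoeff_succ_of_derivative_eq_mul hconst hlog m
    _ = centralBinom (m + 1) / (2 * ↑(m + 1)) := by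
        rw [← hcoeff]
        push_cast
        field_simp
    _ = H (m + 1) := by rw [cast_centralBinom_div_two_mul_eq_factorial_div hn, hH _ hn]
end
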